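/- (Score matching objective equivalence) Under regularity conditions, the expected squared score distance J(θ) = (1/2)·E_{t∼p*}[(ψ(t;θ) − ψ*(t))²] equals E_{t∼p*}[(1/2)·ψ(t;θ)² + ∂_t ψ(t;θ)] plus a constant independent of θ. -/

import Mathlib

/-!
Writing `p⋆ ψ⋆ = p⋆'`, integration by parts on the whole line (the boundary term `p⋆ ψ` vanishes
at `±∞`) turns the cross term `E[ψ⋆ ψ]` into `-E[∂ₜψ]`. Expanding the square in `J(θ)` then
leaves `E[ψ²/2 + ∂ₜψ]` plus `E[ψ⋆²]/2`, which does not depend on `θ`.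
-/

open MeasureTheory Real Filter

lemma mul_deriv_log_eq_deriv {f : ℝ → ℝ} {x : ℝ} (hf : DifferentiableAt ℝ f x) (hx : f x ≠ 0) :
    f x * deriv (fun u => Real.log (f u)) x = deriv f x := by
  rw [deriv.log hf hx, mul_div_cancel₀ _ hx]

/-- Stein's identity. -/
lemma integral_mul_score_mul_eq_neg_integral_mul_deriv {p s φ : ℝ → ℝ}
    (hp : Differentiable ℝ p) (hs : ∀ t, p t * s t = deriv p t) (hφ : Differentiable ℝ φ)
    (hsφ : Integrable fun t => p t * (s t * φ t)) (hφ' : Integrable fun t => p t * deriv φ t)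
    (hbot : Tendsto (fun t => p t * φ t) atBot (nhds 0))
    (htop : Tendsto (fun t => p t * φ t) atTop (nhds 0)) :
    ∫ t, p t * (s t * φ t) = -∫ t, p t * deriv φ t := by
  have hscore : (fun t => p t * (s t * φ t)) = fun t => deriv p t * φ t := by
    ext t
    rw [← hs t, mul_assoc]
  have hp'φ : Integrable fun t => deriv p t * φ t := hscore ▸ hsφ
  rw [integral_mul_deriv_eq_deriv_mul (fun t _ => (hp t).hasDerivAt) (fun t _ => (hφ t).hasDerivAt)
    hφ' hp'φ hbot htop, hscore]
  ring

lemma half_integral_mul_sub_sq {α : Type*} [MeasurableSpace α] {μ : Measure α} {w f g : α → ℝ}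
    (hf : Integrable (fun x => w x * f x ^ 2) μ) (hg : Integrable (fun x => w x * g x ^ 2) μ)
    (hfg : Integrable (fun x => w x * (g x * f x)) μ) :
    (1 / 2) * ∫ x, w x * (f x - g x) ^ 2 ∂μ
      = (1 / 2) * (∫ x, w x * f x ^ 2 ∂μ) - (∫ x, w x * (g x * f x) ∂μ)
        + (1 / 2) * ∫ x, w x * g x ^ 2 ∂μ := by
  have hexpand : (fun x => w x * (f x - g x) ^ 2)
      = fun x => (w x * f x ^ 2 - 2 * (w x * (g x * f x))) + w x * g x ^ 2 := by
    ext x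
    ring
  have hsum : ∫ x, (w x * f x ^ 2 - 2 * (w x * (g x * f x))) + w x * g x ^ 2 ∂μ
      = ∫ x, w x * f x ^ 2 - 2 * (w x * (g x * f x)) ∂μ + ∫ x, w x * g x ^ 2 ∂μ :=
    integral_add (hf.sub (hfg.const_mul 2)) hg
  have hdiff : ∫ x, w x * f x ^ 2 - 2 * (w x * (g x * f x)) ∂μ
      = ∫ x, w x * f x ^ 2 ∂μ - ∫ x, 2 * (w x * (g x * f x)) ∂μ :=
    integral_sub hf (hfg.const_mul 2)
  rw [hexpand, hsum, hdiff, integral_const_mul]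
  ring

theorem score_matching_objective_equivalence_general
    {Θ : Type*} (pstar : ℝ → ℝ) (ψstar : ℝ → ℝ) (ψ : Θ → ℝ → ℝ)
    (hp_pos : ∀ t, 0 < pstar t)
    (hp_smooth : ContDiff ℝ 1 pstar)
    (hψstar : ∀ t, ψstar t = deriv (fun u => Real.log (pstar u)) t)
    (hfisher : Integrable (fun t => pstar t * ψstar t ^ 2))
    (hψ_smooth : ∀ θ, ContDiff ℝ 1 (ψ θ))
    (hψ_sq : ∀ θ, Integrable (fun t => pstar t * ψ θ t ^ 2))
    (hψ_deriv : ∀ θ, Integrable (fun t => pstar t * deriv (ψ θ) t))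
    (hcross : ∀ θ, Integrable (fun t => pstar t * (ψstar t * ψ θ t)))
    (hvanish_top : ∀ θ, Tendsto (fun t => pstar t * ψ θ t) atTop (nhds 0))
    (hvanish_bot : ∀ θ, Tendsto (fun t => pstar t * ψ θ t) atBot (nhds 0)) :
    ∃ C : ℝ, ∀ θ : Θ,
      (1 / 2) * ∫ t, pstar t * (ψ θ t - ψstar t) ^ 2
        = (∫ t, pstar t * ((1 / 2) * ψ θ t ^ 2 + deriv (ψ θ) t)) + C := by
  have hp_diff : Differentiable ℝ pstar := hp_smooth.differentiable one_ne_zero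
  have hscore : ∀ t, pstar t * ψstar t = deriv pstar t := fun t => by
    rw [hψstar t, mul_deriv_log_eq_deriv (hp_diff t) (hp_pos t).ne']
  refine ⟨(1 / 2) * ∫ t, pstar t * ψstar t ^ 2, fun θ => ?_⟩
  have hstein := integral_mul_score_mul_eq_neg_integral_mul_deriv hp_diff hscore
    ((hψ_smooth θ).differentiable one_ne_zero) (hcross θ) (hψ_deriv θ)
    (hvanish_bot θ) (hvanish_top θ)
  have hsplit : ∫ t, pstar t * ((1 / 2) * ψ θ t ^ 2 + deriv (ψ θ) t)
      = (1 / 2) * (∫ t, pstar t * ψ θ t ^ 2) + ∫ t, pstar t * deriv (ψ θ) t := by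
    have hsum := integral_add ((hψ_sq θ).const_mul (1 / 2)) (hψ_deriv θ)
    rw [integral_const_mul] at hsum
    rw [← hsum]
    congr 1
    ext t
    ring
  rw [half_integral_mul_sub_sq (hψ_sq θ) hfisher (hcross θ), hsplit, hstein]
  ring

/-- Score matching objective equivalence: under regularity conditions, the expected
squared score distance `J(θ) = (1/2) E_{p⋆}[(ψ(t;θ) - ψ⋆(t))²]` equals
`E_{p⋆}[(1/2) ψ(t;θ)² + ∂ₜ ψ(t;θ)]` plus a constant independent of `θ`. -/
theorem score_matching_objective_equivalence
    {Θ : Type*} (pstar : ℝ → ℝ) (ψstar : ℝ → ℝ) (ψ : Θ → ℝ → ℝ)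
    (hp_pos : ∀ t, 0 < pstar t)
    (hp_smooth : ContDiff ℝ 1 pstar)
    (hp_int : Integrable pstar) (hp_one : ∫ t, pstar t = 1)
    (hψstar : ∀ t, ψstar t = deriv (fun u => Real.log (pstar u)) t)
    (hfisher : Integrable (fun t => pstar t * ψstar t ^ 2))
    (hψ_smooth : ∀ θ, ContDiff ℝ 1 (ψ θ))
    (hψ_sq : ∀ θ, Integrable (fun t => pstar t * ψ θ t ^ 2))
    (hψ_deriv : ∀ θ, Integrable (fun t => pstar t * deriv (ψ θ) t))
    (hcross : ∀ θ, Integrable (fun t => pstar t * (ψstar t * ψ θ t)))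
    (hvanish_top : ∀ θ, Tendsto (fun t => pstar t * ψ θ t) atTop (nhds 0))
    (hvanish_bot : ∀ θ, Tendsto (fun t => pstar t * ψ θ t) atBot (nhds 0)) :
    ∃ C : ℝ, ∀ θ : Θ,
      (1 / 2) * ∫ t, pstar t * (ψ θ t - ψstar t) ^ 2
        = (∫ t, pstar t * ((1 / 2) * ψ θ t ^ 2 + deriv (ψ θ) t)) + C :=
  score_matching_objective_equivalence_general pstar ψstar ψ hp_pos hp_smooth hψstar hfisher
    hψ_smooth hψ_sq hψ_deriv hcross hvanish_top hvanish_bot
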